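/- arXiv:2103.12692 — 6 statements merged into one kernel-verified Lean document; each statement's English description precedes it below -/
import Mathlib

section
/- Let H be symmetric PSD with 0 < γ λ_max(H) ≤ 1, and let C_t be defined by C_0 = 0 and C_t = (I − γH) C_{t−1} (I − γH) + γ² σ² H. Then for all t ≥ 0, C_t ⪯ γσ² (I − (I − γH)^t). -/
open Matrix Finset

/-! With `B = I - γH ⪰ 0` and `c = γσ²`, the noise term is `γ²σ² H = c (I - B)`, and the gap
`D_t = c (I - B^t) - C_t` satisfies `D_0 = 0` and
`D_{t+1} = B D_t B + c (I - B) (∑_{k<t} B^{k+1}) (I - B)`.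
Both summands are congruences of positive semidefinite matrices, so `D_t ⪰ 0` by induction. -/

theorem one_sub_pow_succ_eq_mul_mul_add {R : Type*} [Ring R] (B : R) (t : ℕ) :
    1 - B ^ (t + 1) = B * (1 - B ^ t) * B + (1 - B)
      + (1 - B) * (∑ k ∈ range t, B ^ (k + 1)) * (1 - B) := by
  have hsum : (∑ k ∈ range t, B ^ (k + 1)) * (1 - B) = B * (1 - B ^ t) := by
    simp only [pow_succ', ← Finset.mul_sum, mul_assoc, geom_sum_mul_neg]
  rw [mul_assoc (1 - B), hsum, pow_succ']
  simp only [mul_sub, sub_mul, mul_one, one_mul, mul_assoc, ← pow_succ, pow_succ']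
  abel

namespace Matrix

variable {n 𝕜 : Type*} [Fintype n] [DecidableEq n] [RCLike 𝕜]

open scoped ComplexOrder

theorem PosSemidef.one_sub_mul_sum_pow_succ_mul_one_sub {B : Matrix n n 𝕜} (hB : B.PosSemidef)
    (t : ℕ) : ((1 - B) * (∑ k ∈ range t, B ^ (k + 1)) * (1 - B)).PosSemidef := by
  have hsum : (∑ k ∈ range t, B ^ (k + 1)).PosSemidef :=
    posSemidef_sum _ fun k _ => hB.pow (k + 1)
  have h1B : (1 - B).IsHermitian := isHermitian_one.sub hB.isHermitian
  have := hsum.mul_mul_conjTranspose_same (1 - B)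
  rwa [h1B.eq] at this

theorem PosSemidef.smul_one_sub_pow_sub_of_recursion {B : Matrix n n 𝕜} (hB : B.PosSemidef)
    {c : ℝ} (hc : 0 ≤ c) {C : ℕ → Matrix n n 𝕜} (h0 : C 0 = 0)
    (hrec : ∀ t, C (t + 1) = B * C t * B + c • (1 - B)) (t : ℕ) :
    (c • (1 - B ^ t) - C t).PosSemidef := by
  induction t with
  | zero => simpa [h0] using PosSemidef.zero
  | succ t ih =>
    have hstep : c • (1 - B ^ (t + 1)) - C (t + 1) = B * (c • (1 - B ^ t) - C t) * B
        + c • ((1 - B) * (∑ k ∈ range t, B ^ (k + 1)) * (1 - B)) := by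
      rw [one_sub_pow_succ_eq_mul_mul_add, hrec]
      simp only [mul_sub, sub_mul, Matrix.mul_smul, Matrix.smul_mul, smul_add, smul_sub]
      abel
    rw [hstep]
    refine PosSemidef.add ?_ ((hB.one_sub_mul_sum_pow_succ_mul_one_sub t).smul hc)
    simpa only [hB.isHermitian.eq] using ih.mul_mul_conjTranspose_same B

end Matrix

theorem variance_recursion_upper_general {d : ℕ} (H : Matrix (Fin d) (Fin d) ℝ) (γ σ2 : ℝ)
    (C : ℕ → Matrix (Fin d) (Fin d) ℝ)
    (hγ : 0 < γ) (hσ : 0 ≤ σ2)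
    (hle : ((1 : Matrix (Fin d) (Fin d) ℝ) - γ • H).PosSemidef)
    (h0 : C 0 = 0)
    (hrec : ∀ t, C (t + 1) = (1 - γ • H) * C t * (1 - γ • H) + (γ ^ 2 * σ2) • H) :
    ∀ t, ((γ * σ2) • ((1 : Matrix (Fin d) (Fin d) ℝ) - (1 - γ • H) ^ t)
      - C t).PosSemidef := by
  have hnoise : (γ ^ 2 * σ2) • H = (γ * σ2) • (1 - (1 - γ • H)) := by
    rw [sub_sub_cancel, smul_smul]
    ring_nf
  exact hle.smul_one_sub_pow_sub_of_recursion (by positivity) h0 (by simpa only [hnoise] using hrec)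

/-- for symmetric PSD `H` with `0 < γ` and `γ λ_max(H) ≤ 1`
(i.e. `I - γH ⪰ 0`), the recursion `C_0 = 0`,
`C_t = (I - γH) C_{t-1} (I - γH) + γ²σ² H` satisfies
`C_t ⪯ γσ² (I - (I - γH)^t)` for all `t`. -/
theorem variance_recursion_upper {d : ℕ} (H : Matrix (Fin d) (Fin d) ℝ) (γ σ2 : ℝ)
    (C : ℕ → Matrix (Fin d) (Fin d) ℝ)
    (hH : H.PosSemidef) (hγ : 0 < γ) (hσ : 0 ≤ σ2)
    (hle : ((1 : Matrix (Fin d) (Fin d) ℝ) - γ • H).PosSemidef)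
    (h0 : C 0 = 0)
    (hrec : ∀ t, C (t + 1) = (1 - γ • H) * C t * (1 - γ • H) + (γ ^ 2 * σ2) • H) :
    ∀ t, ((γ * σ2) • ((1 : Matrix (Fin d) (Fin d) ℝ) - (1 - γ • H) ^ t)
      - C t).PosSemidef :=
  variance_recursion_upper_general H γ σ2 C hγ hσ hle h0 hrec
end

section
/- Let H be symmetric PSD with γ λ_max(H) < 1 and define C_t by C_0 = 0, C_t = (I − γH) C_{t−1} (I − γH) + γ²σ² H. Then for all t, C_t ⪰ (γσ²/2) (I − (I − γH)^{2t}). -/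
/-!
Write `B = 1 - γH` and `c = γσ²/2`. The gap `D_t = C_t - c (1 - B^{2t})` obeys the same
recursion as `C_t`, with the forcing term `γ²σ² H` replaced by
`γ²σ² H - c (1 - B²) = (γ³σ²/2) H²`, which is positive semidefinite. Since `D_0 = 0` and
congruence by the symmetric matrix `B` preserves positive semidefiniteness, every `D_t` is
positive semidefinite.
-/

open Matrix

variable {n : Type*} [Fintype n]

theorem Matrix.posSemidef_of_eq_conjTranspose_mul_mul_add {R : Type*} [Ring R] [PartialOrder R]
    [StarRing R] [AddLeftMono R] {D : ℕ → Matrix n n R} {B E : Matrix n n R}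
    (h0 : (D 0).PosSemidef) (hE : E.PosSemidef)
    (hrec : ∀ t, D (t + 1) = Bᴴ * D t * B + E) (t : ℕ) : (D t).PosSemidef := by
  induction t with
  | zero => exact h0
  | succ t ih => exact hrec t ▸ (ih.conjTranspose_mul_mul_same B).add hE

theorem one_sub_smul_conj_add_sub_eq {K : Type*} [Field K] [CharZero K] [DecidableEq n]
    (H C : Matrix n n K) (γ σ2 : K) (t : ℕ) :
    (1 - γ • H) * C * (1 - γ • H) + (γ ^ 2 * σ2) • H
        - (γ * σ2 / 2) • (1 - (1 - γ • H) ^ (2 * (t + 1)))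
      = (1 - γ • H) * (C - (γ * σ2 / 2) • (1 - (1 - γ • H) ^ (2 * t))) * (1 - γ • H)
        + (γ ^ 3 * σ2 / 2) • H ^ 2 := by
  rw [show 2 * (t + 1) = 1 + 2 * t + 1 by ring, pow_add, pow_add, pow_one, sq H]
  simp only [mul_sub, sub_mul, smul_sub, smul_smul, mul_smul_comm, smul_mul_assoc, mul_one,
    one_mul]
  module

theorem variance_recursion_lower_general {d : ℕ} (H : Matrix (Fin d) (Fin d) ℝ) (γ σ2 : ℝ)
    (C : ℕ → Matrix (Fin d) (Fin d) ℝ)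
    (hH : H.PosSemidef) (hγ : 0 < γ) (hσ : 0 ≤ σ2)
    (h0 : C 0 = 0)
    (hrec : ∀ t, C (t + 1) = (1 - γ • H) * C t * (1 - γ • H) + (γ ^ 2 * σ2) • H) :
    ∀ t, (C t - (γ * σ2 / 2) • ((1 : Matrix (Fin d) (Fin d) ℝ)
      - (1 - γ • H) ^ (2 * t))).PosSemidef := by
  have hB : (1 - γ • H)ᴴ = 1 - γ • H := by
    rw [conjTranspose_sub, conjTranspose_one, conjTranspose_smul, hH.1.eq, star_trivial]
  refine posSemidef_of_eq_conjTranspose_mul_mul_add (B := 1 - γ • H)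
    (by simp [h0, PosSemidef.zero])
    ((hH.pow 2).smul (by positivity : (0 : ℝ) ≤ γ ^ 3 * σ2 / 2)) fun t => ?_
  rw [hB, hrec, one_sub_smul_conj_add_sub_eq]

/-- for symmetric PSD `H` with `0 < γ` and `γ λ_max(H) < 1`
(i.e. `I - γH ≻ 0`), the recursion `C_0 = 0`,
`C_t = (I - γH) C_{t-1} (I - γH) + γ²σ² H` satisfies
`C_t ⪰ (γσ²/2) (I - (I - γH)^{2t})` for all `t`. -/
theorem variance_recursion_lower {d : ℕ} (H : Matrix (Fin d) (Fin d) ℝ) (γ σ2 : ℝ)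
    (C : ℕ → Matrix (Fin d) (Fin d) ℝ)
    (hH : H.PosSemidef) (hγ : 0 < γ) (hσ : 0 ≤ σ2)
    (hlt : ((1 : Matrix (Fin d) (Fin d) ℝ) - γ • H).PosDef)
    (h0 : C 0 = 0)
    (hrec : ∀ t, C (t + 1) = (1 - γ • H) * C t * (1 - γ • H) + (γ ^ 2 * σ2) • H) :
    ∀ t, (C t - (γ * σ2 / 2) • ((1 : Matrix (Fin d) (Fin d) ℝ)
      - (1 - γ • H) ^ (2 * t))).PosSemidef :=
  variance_recursion_lower_general H γ σ2 C hH hγ hσ h0 hrec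
end

section
/- For 0 < x ≤ 1 and integer N ≥ 1, Σ_{t=0}^{N−1} (1−x)^{2t} (1 − (1−x)^{N−t}) ≥ (1 − (1−x)^N)² / (2x). -/
/-- for `0 < x ≤ 1` and `N ≥ 1`,
`Σ_{t=0}^{N-1} (1-x)^{2t} (1 - (1-x)^{N-t}) ≥ (1 - (1-x)^N)² / (2x)`. -/
theorem sum_geom_bias_lower (x : ℝ) (N : ℕ) (hx0 : 0 < x) (hx1 : x ≤ 1) (hN : 1 ≤ N) :
    (1 - (1 - x) ^ N) ^ 2 / (2 * x)
      ≤ ∑ t ∈ Finset.range N, (1 - x) ^ (2 * t) * (1 - (1 - x) ^ (N - t)) := by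
  set q : ℝ := 1 - x with hq
  have hq0 : 0 ≤ q := by simp [hq]; linarith
  have hq1 : q < 1 := by simp [hq]; linarith
  have hs0 : 0 ≤ q ^ N := pow_nonneg hq0 N
  have hs1 : q ^ N ≤ 1 := pow_le_one₀ hq0 hq1.le
  have hsum : ∑ t ∈ Finset.range N, q ^ (2 * t) * (1 - q ^ (N - t))
      = (∑ t ∈ Finset.range N, (q ^ 2) ^ t) - q ^ N * (∑ t ∈ Finset.range N, q ^ t) := by
    rw [Finset.mul_sum, ← Finset.sum_sub_distrib]
    refine Finset.sum_congr rfl fun t ht => ?_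
    have htN : t ≤ N := le_of_lt (Finset.mem_range.mp ht)
    have h1 : (q ^ 2) ^ t = q ^ (2 * t) := by rw [← pow_mul]
    have h2 : q ^ (2 * t) * q ^ (N - t) = q ^ N * q ^ t := by
      rw [← pow_add, ← pow_add]; congr 1; omega
    rw [mul_sub, mul_one, h2, h1]
  have hne : q ≠ 1 := ne_of_lt hq1
  have hne2 : q ^ 2 ≠ 1 := by nlinarith [sq_nonneg q]
  rw [hsum, geom_sum_eq hne2, geom_sum_eq hne]
  have hqN2 : (q ^ 2) ^ N = (q ^ N) ^ 2 := by rw [← pow_mul, mul_comm, pow_mul]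
  rw [hqN2]
  set s : ℝ := q ^ N with hs
  have key : ((s ^ 2 - 1) / (q ^ 2 - 1)) - s * ((s - 1) / (q - 1))
      = ((1 - s) * (1 + s) - s * (1 - s) * (1 + q)) / ((1 - q) * (1 + q)) := by
    have h1 : q - 1 ≠ 0 := by intro h; apply hne; linarith
    have h2 : q ^ 2 - 1 ≠ 0 := by intro h; apply hne2; linarith
    have h3 : (1 - q) * (1 + q) ≠ 0 := by
      intro h; apply h2; nlinarith
    field_simp
    ring
  rw [key]
  have hx2 : (0:ℝ) < 2 * x := by linarith
  have hd : (0:ℝ) < (1 - q) * (1 + q) := by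
    apply mul_pos <;> linarith
  rw [div_le_div_iff₀ hx2 hd]
  have hxq : x = 1 - q := by simp [hq]
  rw [show (2:ℝ) * x = 2 * (1 - q) from by rw [hxq]]
  nlinarith [mul_nonneg (mul_nonneg (mul_nonneg (by linarith : (0:ℝ) ≤ 1 - q) (by linarith : (0:ℝ) ≤ 1 - q)) (by linarith : (0:ℝ) ≤ 1 - s)) (by linarith : (0:ℝ) ≤ 1 + s)]
end

section
/- For integer N ≥ 500 and 1/N ≤ x < 1, the function f(x) = N − 2(1 − (1−x)^N)/x + N(1−x)^{N−1} satisfies f(x) ≥ N/10. -/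
/-!
Multiplying by `x`, the claim for `N = n + 2` becomes `2 ≤ g x` with
`g x = (9/10) N x + 2 (1 - x)^N + N x (1 - x)^(N-1)`. Its derivative is
`N (9/10 - (1 - x)^n (1 + n x))`, and `(1 - x)^n (1 + n x) ≤ (1 + u) e^(-u)` with
`u = n x ≥ 19/20`, which is below `9/10`; so `g` increases on `[1/N, 1]`. At `x = 1/N`,
`g = 9/10 + (1 - 1/N)^(N-1) (3 - 2/N)` and `(1 - 1/N)^(N-1) ≥ e^(-1)`, which leaves
`g(1/N) ≥ 2` with a margin of about `0.002`.
-/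

open Real Set

lemma one_add_mul_exp_neg_le {u : ℝ} (hu : 19 / 20 ≤ u) : (1 + u) * exp (-u) ≤ 9 / 10 := by
  have hsq : (1 + u / 2) ^ 2 ≤ exp u := by
    rw [show exp u = exp (u / 2) ^ 2 by rw [← exp_nat_mul]; ring_nf]
    exact pow_le_pow_left₀ (by linarith) (by linarith [add_one_le_exp (u / 2)]) 2
  calc (1 + u) * exp (-u) ≤ (9 / 10 * exp u) * exp (-u) := by
        gcongr; nlinarith
    _ = 9 / 10 := by rw [mul_assoc, ← exp_add, add_neg_cancel, exp_zero, mul_one]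

lemma one_sub_pow_mul_one_add_le {y : ℝ} (n : ℕ) (hy : y ≤ 1) (hny : 19 / 20 ≤ n * y) :
    (1 - y) ^ n * (1 + n * y) ≤ 9 / 10 := by
  have hpow : (1 - y) ^ n ≤ exp (-(n * y)) := by
    rw [← mul_neg, exp_nat_mul]
    exact pow_le_pow_left₀ (by linarith) (one_sub_le_exp_neg y) n
  calc (1 - y) ^ n * (1 + n * y) ≤ exp (-(n * y)) * (1 + n * y) := by gcongr
    _ ≤ 9 / 10 := by rw [mul_comm]; exact one_add_mul_exp_neg_le hny

lemma exp_neg_one_le_one_sub_inv_pow (n : ℕ) : exp (-1) ≤ (1 - 1 / (n + 1 : ℝ)) ^ n := by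
  rcases n.eq_zero_or_pos with rfl | hn
  · simp
  have hn' : (0 : ℝ) < n := by exact_mod_cast hn
  have hpos : (0 : ℝ) < 1 - 1 / (n + 1) := by
    rw [sub_pos, div_lt_one (by positivity)]; linarith
  have hlog : -1 ≤ n * log (1 - 1 / (n + 1 : ℝ)) := by
    have h := one_sub_inv_le_log_of_pos hpos
    have hinv : 1 - (1 - 1 / (n + 1 : ℝ))⁻¹ = -1 / n := by
      rw [one_sub_div (by positivity), add_sub_cancel_right, inv_div]
      field_simp; ring
    rw [hinv, div_le_iff₀' hn'] at h
    linarith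
  calc exp (-1) ≤ exp (n * log (1 - 1 / (n + 1 : ℝ))) := exp_le_exp.mpr hlog
    _ = (1 - 1 / (n + 1 : ℝ)) ^ n := by rw [exp_nat_mul, exp_log hpos]

lemma hasDerivAt_two_mul_one_sub_pow_add (n : ℕ) (x : ℝ) :
    HasDerivAt (fun x : ℝ => 2 * (1 - x) ^ (n + 2) + (n + 2) * x * (1 - x) ^ (n + 1))
      (-((n + 2) * ((1 - x) ^ n * (1 + n * x)))) x := by
  have h1 : HasDerivAt (fun x : ℝ => 1 - x) (-1) x := (hasDerivAt_id x).const_sub 1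
  have := ((h1.fun_pow (n + 2)).const_mul 2).fun_add
    (((hasDerivAt_id' x).const_mul ((n : ℝ) + 2)).fun_mul (h1.fun_pow (n + 1)))
  refine this.congr_deriv ?_
  simp only [Nat.add_sub_cancel]; push_cast; ring

lemma monotoneOn_nine_tenths_mul_add (n : ℕ) (hn : 38 ≤ n) :
    MonotoneOn (fun x : ℝ =>
        9 / 10 * (n + 2) * x + (2 * (1 - x) ^ (n + 2) + (n + 2) * x * (1 - x) ^ (n + 1)))
      (Icc (1 / (n + 2)) 1) := by
  have hderiv (x : ℝ) := ((hasDerivAt_id' x).const_mul (9 / 10 * ((n : ℝ) + 2))).fun_add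
    (hasDerivAt_two_mul_one_sub_pow_add n x)
  refine monotoneOn_of_hasDerivWithinAt_nonneg (convex_Icc _ _) (by fun_prop)
    (fun x _ => (hderiv x).hasDerivWithinAt) ?_
  intro x hx
  rw [interior_Icc] at hx
  obtain ⟨hx1, hx2⟩ := hx
  have hn' : (38 : ℝ) ≤ n := by exact_mod_cast hn
  have hnx : 19 / 20 ≤ n * x := by
    rw [div_lt_iff₀ (by positivity)] at hx1
    nlinarith
  have := one_sub_pow_mul_one_add_le n hx2.le hnx
  nlinarith

lemma eleven_tenths_le_two_mul_one_sub_inv_pow_add (n : ℕ) (hn : 208 ≤ n) :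
    11 / 10 ≤ 2 * (1 - 1 / (n + 2 : ℝ)) ^ (n + 2) + (1 - 1 / (n + 2 : ℝ)) ^ (n + 1) := by
  have hn' : (208 : ℝ) ≤ n := by exact_mod_cast hn
  set c : ℝ := 1 - 1 / (n + 2)
  have hpow : exp (-1) ≤ c ^ (n + 1) := by
    have := exp_neg_one_le_one_sub_inv_pow (n + 1)
    rwa [Nat.cast_succ, add_assoc, one_add_one_eq_two] at this
  have hc_lower : 314 / 105 ≤ 2 * c + 1 := by
    have : 1 / (n + 2 : ℝ) ≤ 1 / 210 := by gcongr; linarith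
    linarith
  have he : exp 1 * exp (-1) = 1 := by rw [← exp_add, add_neg_cancel, exp_zero]
  have hsplit : 2 * c ^ (n + 2) + c ^ (n + 1) = c ^ (n + 1) * (2 * c + 1) := by ring
  rw [hsplit]
  calc (11 / 10 : ℝ) ≤ exp (-1) * (314 / 105) := by nlinarith [exp_one_lt_d9, exp_pos (-1)]
    _ ≤ c ^ (n + 1) * (2 * c + 1) :=
      mul_le_mul hpow hc_lower (by norm_num) ((exp_pos _).le.trans hpow)

/-- for `N ≥ 500` and `1/N ≤ x < 1`,
`f(x) = N - 2(1-(1-x)^N)/x + N(1-x)^{N-1} ≥ N/10`. -/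
theorem variance_f_lower_large_x (x : ℝ) (N : ℕ) (hN : 500 ≤ N) (hx1 : 1 / (N : ℝ) ≤ x)
    (hx2 : x < 1) :
    (N : ℝ) / 10
      ≤ (N : ℝ) - 2 * (1 - (1 - x) ^ N) / x + (N : ℝ) * (1 - x) ^ (N - 1) := by
  obtain ⟨n, rfl⟩ : ∃ n, N = n + 2 := ⟨N - 2, by omega⟩
  push_cast at hx1 ⊢
  have hx0 : 0 < x := lt_of_lt_of_le (by positivity) hx1
  have hmono := monotoneOn_nine_tenths_mul_add n (by omega)
    ⟨le_rfl, by rw [div_le_one (by positivity)]; linarith⟩ ⟨hx1, hx2.le⟩ hx1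
  have hend := eleven_tenths_le_two_mul_one_sub_inv_pow_add n (by omega)
  have hcancel : ((n : ℝ) + 2) * (1 / (n + 2)) = 1 := mul_one_div_cancel (by positivity)
  simp only [mul_assoc, hcancel, one_mul, mul_one] at hmono
  have hcleared : (n + 2 : ℝ) - 2 * (1 - (1 - x) ^ (n + 2)) / x + (n + 2) * (1 - x) ^ (n + 1)
      - (n + 2) / 10 = (9 / 10 * (n + 2) * x
        + (2 * (1 - x) ^ (n + 2) + (n + 2) * x * (1 - x) ^ (n + 1)) - 2) / x := by
    field_simp; ring
  rw [← sub_nonneg, hcleared]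
  exact div_nonneg (by linarith) hx0.le
end

section
/- For integer N ≥ 500 and 0 < x < 1/N, f(x) = N − 2(1 − (1−x)^N)/x + N(1−x)^{N−1} satisfies f(x) ≥ (2/25) N³ x². -/
/-!
With `y = 1 - x`, pairing the terms of the geometric sum `(1 - y ^ N) / x = ∑_{k<N} y ^ k` writes
`f(x) = ∑_{i+j=N-1} (1 - y ^ i) (1 - y ^ j)`, a sum of nonnegative terms. Since
`1 - y ^ k ≥ kx - (kx)² / 2` and `(i + j) x < 1`, each term is at least `i j x² / 2`, and
`∑_{i+j=N-1} i j = N (N - 1) (N - 2) / 6`. Hence `f(x) ≥ N (N - 1) (N - 2) x² / 12`, which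
exceeds `(2/25) N³ x²` once `N ≥ 75`.
-/

open Finset Finset.Nat

theorem Finset.Nat.two_mul_sum_antidiagonal_fst {R : Type*} [CommRing R] (n : ℕ) :
    2 * ∑ p ∈ antidiagonal n, (p.1 : R) = n * (n + 1) := by
  induction n with
  | zero => simp
  | succ n ih =>
    rw [sum_antidiagonal_succ]
    push_cast
    rw [sum_add_distrib, sum_const, card_antidiagonal, nsmul_eq_mul]
    push_cast
    linear_combination ih

theorem Finset.Nat.six_mul_sum_antidiagonal_mul {R : Type*} [CommRing R] (n : ℕ) :
    6 * ∑ p ∈ antidiagonal n, (p.1 * p.2 : R) = (n + 1) * n * (n - 1) := by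
  induction n with
  | zero => simp
  | succ n ih =>
    have hfst := two_mul_sum_antidiagonal_fst (R := R) n
    rw [sum_antidiagonal_succ']
    push_cast
    simp only [mul_add, mul_one, sum_add_distrib]
    linear_combination ih + 3 * hfst

theorem Finset.Nat.sum_antidiagonal_one_sub_pow_mul_one_sub_pow {R : Type*} [CommRing R] (y : R)
    (n : ℕ) :
    ∑ p ∈ antidiagonal n, (1 - y ^ p.1) * (1 - y ^ p.2)
      = (n + 1) * (1 + y ^ n) - 2 * ∑ i ∈ range (n + 1), y ^ i := by
  have hprod : ∀ p ∈ antidiagonal n, y ^ p.1 * y ^ p.2 = y ^ n := fun p hp => by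
    rw [← pow_add, mem_antidiagonal.mp hp]
  have hswap : ∑ p ∈ antidiagonal n, y ^ p.2 = ∑ p ∈ antidiagonal n, y ^ p.1 :=
    sum_antidiagonal_swap (f := fun p => y ^ p.1)
  have hrange : ∑ p ∈ antidiagonal n, y ^ p.1 = ∑ i ∈ range (n + 1), y ^ i :=
    sum_antidiagonal_eq_sum_range_succ_mk (fun p => y ^ p.1) n
  simp only [sub_mul, one_mul, mul_sub, mul_one, sum_sub_distrib]
  rw [sum_congr rfl hprod, hswap, hrange, sum_const, sum_const, card_antidiagonal, nsmul_eq_mul,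
    nsmul_eq_mul]
  push_cast
  ring

theorem one_sub_pow_le_one_sub_mul_add_sq_div_two {x : ℝ} (h0 : 0 ≤ x) (h1 : x ≤ 1)
    (n : ℕ) :
    (1 - x) ^ n ≤ 1 - n * x + (n * x) ^ 2 / 2 := by
  induction n with
  | zero => simp
  | succ n ih =>
    have hstep := mul_le_mul_of_nonneg_right ih (sub_nonneg.mpr h1)
    rw [pow_succ]
    push_cast
    nlinarith [mul_nonneg (mul_nonneg (sq_nonneg (n : ℝ)) (sq_nonneg x)) h0, sq_nonneg x]

theorem mul_sq_div_two_le_one_sub_pow_mul {x : ℝ} (h0 : 0 ≤ x) (h1 : x ≤ 1) {i j : ℕ}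
    (hij : (i + j) * x ≤ 1) :
    i * j * x ^ 2 / 2 ≤ (1 - (1 - x) ^ i) * (1 - (1 - x) ^ j) := by
  have hu : 0 ≤ (i : ℝ) * x := by positivity
  have hv : 0 ≤ (j : ℝ) * x := by positivity
  have hi := one_sub_pow_le_one_sub_mul_add_sq_div_two h0 h1 i
  have hj := one_sub_pow_le_one_sub_mul_add_sq_div_two h0 h1 j
  calc (i : ℝ) * j * x ^ 2 / 2
      ≤ (i * x - (i * x) ^ 2 / 2) * (j * x - (j * x) ^ 2 / 2) := by
        nlinarith [mul_nonneg (mul_nonneg hu hv) (sub_nonneg.mpr hij), mul_nonneg hu hv,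
          mul_nonneg (mul_nonneg hu hv) (mul_nonneg hu hv)]
    _ ≤ (1 - (1 - x) ^ i) * (1 - (1 - x) ^ j) := by
        apply mul_le_mul <;> nlinarith

theorem sum_antidiagonal_one_sub_one_sub_pow_mul_eq {x : ℝ} (hx : x ≠ 0) (n : ℕ) :
    ∑ p ∈ antidiagonal n, (1 - (1 - x) ^ p.1) * (1 - (1 - x) ^ p.2)
      = (n + 1) - 2 * (1 - (1 - x) ^ (n + 1)) / x + (n + 1) * (1 - x) ^ n := by
  have hgeom : (∑ i ∈ range (n + 1), (1 - x) ^ i) * x = 1 - (1 - x) ^ (n + 1) := by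
    simpa using geom_sum_mul_neg (1 - x) (n + 1)
  rw [sum_antidiagonal_one_sub_pow_mul_one_sub_pow, ← hgeom]
  field_simp
  ring

/-- for `N ≥ 500` and `0 < x < 1/N`,
`f(x) = N - 2(1-(1-x)^N)/x + N(1-x)^{N-1} ≥ (2/25) N³ x²`. -/
theorem variance_f_lower_small_x (x : ℝ) (N : ℕ) (hN : 500 ≤ N) (hx0 : 0 < x)
    (hx1 : x < 1 / (N : ℝ)) :
    (2 / 25) * (N : ℝ) ^ 3 * x ^ 2
      ≤ (N : ℝ) - 2 * (1 - (1 - x) ^ N) / x + (N : ℝ) * (1 - x) ^ (N - 1) := by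
  obtain ⟨n, rfl⟩ : ∃ n, N = n + 1 := ⟨N - 1, by omega⟩
  replace hN : (499 : ℝ) ≤ n := by exact_mod_cast (by omega : 499 ≤ n)
  have hnx : (n + 1) * x ≤ 1 := by
    rw [Nat.cast_add_one, lt_div_iff₀ (by positivity)] at hx1
    linarith
  have hx_le_one : x ≤ 1 := le_trans (le_mul_of_one_le_left hx0.le (by linarith)) hnx
  have hterm : ∀ p ∈ antidiagonal n,
      p.1 * p.2 * x ^ 2 / 2 ≤ (1 - (1 - x) ^ p.1) * (1 - (1 - x) ^ p.2) := fun p hp => by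
    refine mul_sq_div_two_le_one_sub_pow_mul hx0.le hx_le_one ?_
    rw [← Nat.cast_add, mem_antidiagonal.mp hp]
    linarith
  have hsum := six_mul_sum_antidiagonal_mul (R := ℝ) n
  calc (2 / 25) * ((n + 1 : ℕ) : ℝ) ^ 3 * x ^ 2
      ≤ (n + 1) * n * (n - 1) / 12 * x ^ 2 := by
        gcongr
        push_cast
        have hquad : 24 * ((n : ℝ) + 1) ^ 2 ≤ 25 * n * (n - 1) := by nlinarith
        nlinarith
    _ = ∑ p ∈ antidiagonal n, p.1 * p.2 * x ^ 2 / 2 := by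
        rw [← sum_div, ← sum_mul, ← hsum]
        ring
    _ ≤ _ := sum_le_sum hterm
    _ = _ := by
        rw [sum_antidiagonal_one_sub_one_sub_pow_mul_eq hx0.ne', Nat.add_sub_cancel,
          Nat.cast_add_one]
end

section
/- Let H be symmetric PSD, γ λ_max(H) ≤ 1, and for a vector β_0 define ω_i = v_i^T β_0 where v_i are orthonormal eigenvectors of H with eigenvalues λ_i. Then (1/(γN²)) Σ_{k=0}^{N−1} ⟨(I−γH)^k − (I−γH)^{N+k}, β_0 β_0^T⟩ ≤ (1/(γ²N²)) Σ_{i ≤ k*} ω_i²/λ_i + Σ_{i > k*} λ_i ω_i², where k* = max{k : λ_k ≥ 1/(γN)} and eigenvalues are sorted decreasingly. -/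
/-!
With `r_i = 1 - γλ_i`, the matrix `1 - γH` acts on `v_i` as multiplication by `r_i`, so the
left side is `(1/(γN²)) Σ_i ω_i² S(r_i)` with
`S(r) = Σ_{k<N} (r^k - r^{N+k}) = (1 - r) (Σ_{k<N} r^k)²`.
For `0 ≤ r ≤ 1` the factor `(1 - r) Σ_{k<N} r^k = 1 - r^N` lies in `[0, 1]` and `Σ_{k<N} r^k ≤ N`,
so `S(r_i)` is at most both `1/(γλ_i)` and `γλ_i N²`.
-/

open Matrix Finset

section Spectral

variable {n R : Type*} [Fintype n] [DecidableEq n] [CommRing R] {v : n → n → R}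

theorem sum_vecMulVec_self_eq_one (horth : ∀ i j, v i ⬝ᵥ v j = if i = j then 1 else 0) :
    ∑ i, vecMulVec (v i) (v i) = 1 := by
  have hrows : of v * (of v)ᵀ = 1 := by
    ext i j
    simpa [mul_apply, dotProduct, one_apply] using horth i j
  have hcols : (of v)ᵀ * of v = 1 := mul_eq_one_comm.mp hrows
  ext a b
  simpa [Matrix.sum_apply, mul_apply, vecMulVec_apply] using congrFun (congrFun hcols a) b

theorem sum_smul_vecMulVec_self_pow (horth : ∀ i j, v i ⬝ᵥ v j = if i = j then 1 else 0)
    (c : n → R) (k : ℕ) :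
    (∑ i, c i • vecMulVec (v i) (v i)) ^ k = ∑ i, c i ^ k • vecMulVec (v i) (v i) := by
  induction k with
  | zero => simp [sum_vecMulVec_self_eq_one horth]
  | succ k ih =>
    rw [pow_succ, ih, sum_mul]
    refine sum_congr rfl fun i _ => ?_
    rw [mul_sum, sum_eq_single i]
    · rw [smul_mul_smul_comm, vecMulVec_mul_vecMulVec, horth, if_pos rfl, one_smul, pow_succ]
    · intro j _ hji
      rw [smul_mul_smul_comm, vecMulVec_mul_vecMulVec, horth, if_neg hji.symm, zero_smul,
        vecMulVec_zero, smul_zero]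
    · simp

end Spectral

theorem trace_transpose_mul_vecMulVec_self {n R : Type*} [Fintype n] [CommRing R]
    (v : n → n → R) (c : n → R) (β : n → R) :
    trace ((∑ i, c i • vecMulVec (v i) (v i))ᵀ * vecMulVec β β)
      = ∑ i, c i * (v i ⬝ᵥ β) ^ 2 := by
  simp only [transpose_sum, transpose_smul, transpose_vecMulVec, sum_mul, smul_mul_assoc,
    vecMulVec_mul_vecMulVec, trace_sum, trace_smul, trace_vecMulVec, dotProduct_smul,
    smul_eq_mul]
  exact sum_congr rfl fun i _ => by ring

theorem sum_range_pow_sub_pow_add {R : Type*} [CommRing R] (r : R) (N : ℕ) :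
    ∑ k ∈ range N, (r ^ k - r ^ (N + k)) = (1 - r) * (∑ k ∈ range N, r ^ k) ^ 2 := by
  have hfactor : ∑ k ∈ range N, (r ^ k - r ^ (N + k)) = (1 - r ^ N) * ∑ k ∈ range N, r ^ k := by
    rw [mul_sum]
    exact sum_congr rfl fun k _ => by ring
  rw [hfactor, ← mul_neg_geom_sum]
  ring

section Bounds

variable {R : Type*} [CommRing R] [LinearOrder R] [IsStrictOrderedRing R] {x : R}

theorem mul_sum_range_one_sub_pow_sub_pow_add_le_one (hx0 : 0 ≤ x) (hx1 : x ≤ 1) (N : ℕ) :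
    x * ∑ k ∈ range N, ((1 - x) ^ k - (1 - x) ^ (N + k)) ≤ 1 := by
  have hgeom := mul_neg_geom_sum (1 - x) N
  have hpow0 : 0 ≤ (1 - x) ^ N := pow_nonneg (by linarith) N
  have hpow1 : (1 - x) ^ N ≤ 1 := pow_le_one₀ (by linarith) (by linarith)
  calc x * ∑ k ∈ range N, ((1 - x) ^ k - (1 - x) ^ (N + k))
      = (1 - (1 - x) ^ N) ^ 2 := by rw [sum_range_pow_sub_pow_add, ← hgeom]; ring
    _ ≤ 1 := pow_le_one₀ (by linarith) (by linarith)

theorem sum_range_one_sub_pow_sub_pow_add_le (hx0 : 0 ≤ x) (hx1 : x ≤ 1) (N : ℕ) :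
    ∑ k ∈ range N, ((1 - x) ^ k - (1 - x) ^ (N + k)) ≤ x * N ^ 2 := by
  have hgeom : ∑ k ∈ range N, (1 - x) ^ k ≤ N := by
    simpa using sum_le_card_nsmul (range N) ((1 - x) ^ ·) 1
      fun k _ => pow_le_one₀ (by linarith) (by linarith)
  rw [sum_range_pow_sub_pow_add, sub_sub_cancel]
  gcongr

end Bounds

theorem sum_le_sum_filter_add_sum_filter_not {ι M : Type*} [AddCommMonoid M] [PartialOrder M]
    [IsOrderedAddMonoid M] (s : Finset ι) (p : ι → Prop) [DecidablePred p] {f a b : ι → M}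
    (ha : ∀ i ∈ s, p i → f i ≤ a i) (hb : ∀ i ∈ s, ¬p i → f i ≤ b i) :
    ∑ i ∈ s, f i ≤ ∑ i ∈ s with p i, a i + ∑ i ∈ s with ¬p i, b i := by
  rw [← sum_filter_add_sum_filter_not s p f]
  gcongr with i hi i hi
  · exact ha i (mem_filter.mp hi).1 (mem_filter.mp hi).2
  · exact hb i (mem_filter.mp hi).1 (mem_filter.mp hi).2

theorem bias_bound_effective_dim_general {d : ℕ} (H : Matrix (Fin d) (Fin d) ℝ) (γ : ℝ) (N : ℕ)
    (kstar : ℕ) (v : Fin d → Fin d → ℝ) (lam : Fin d → ℝ) (β0 : Fin d → ℝ)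
    (hH : H = ∑ i, lam i • Matrix.vecMulVec (v i) (v i))
    (horth : ∀ i j, v i ⬝ᵥ v j = if i = j then (1 : ℝ) else 0)
    (hpos : ∀ i, 0 < lam i)
    (hγ : 0 < γ) (hγ1 : ∀ i, γ * lam i ≤ 1) (hN : 0 < N) :
    (1 / (γ * (N : ℝ) ^ 2)) * ∑ k ∈ Finset.range N,
        Matrix.trace ((((1 - γ • H) ^ k - (1 - γ • H) ^ (N + k)))ᵀ
          * Matrix.vecMulVec β0 β0)
      ≤ (1 / (γ ^ 2 * (N : ℝ) ^ 2))
          * ∑ i ∈ Finset.univ.filter (fun i : Fin d => (i : ℕ) < kstar),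
              (v i ⬝ᵥ β0) ^ 2 / lam i
        + ∑ i ∈ Finset.univ.filter (fun i : Fin d => kstar ≤ (i : ℕ)),
            lam i * (v i ⬝ᵥ β0) ^ 2 := by
  have hM : 1 - γ • H = ∑ i, (1 - γ * lam i) • vecMulVec (v i) (v i) := by
    rw [hH, ← sum_vecMulVec_self_eq_one horth, smul_sum, ← sum_sub_distrib]
    exact sum_congr rfl fun i _ => by rw [smul_smul, sub_smul, one_smul]
  have hLHS : ∑ k ∈ range N, trace (((1 - γ • H) ^ k - (1 - γ • H) ^ (N + k))ᵀ * vecMulVec β0 β0)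
      = ∑ i, ∑ k ∈ range N,
          ((1 - γ * lam i) ^ k - (1 - γ * lam i) ^ (N + k)) * (v i ⬝ᵥ β0) ^ 2 := by
    simp only [hM, sum_smul_vecMulVec_self_pow horth, ← sum_sub_distrib, ← sub_smul,
      trace_transpose_mul_vecMulVec_self]
    exact sum_comm
  have hNR : (0 : ℝ) < N := by exact_mod_cast hN
  rw [hLHS, mul_sum, mul_sum]
  simp only [← sum_mul, ← not_lt (b := kstar)]
  have hγlam (i : Fin d) : 0 < γ * lam i := mul_pos hγ (hpos i)
  apply sum_le_sum_filter_add_sum_filter_not <;> intro i _ _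
  · have hS : ∑ k ∈ range N, ((1 - γ * lam i) ^ k - (1 - γ * lam i) ^ (N + k))
        ≤ 1 / (γ * lam i) := by
      rw [le_div_iff₀' (hγlam i)]
      exact mul_sum_range_one_sub_pow_sub_pow_add_le_one (hγlam i).le (hγ1 i) N
    calc _ ≤ 1 / (γ * N ^ 2) * (1 / (γ * lam i) * (v i ⬝ᵥ β0) ^ 2) := by gcongr
      _ = 1 / (γ ^ 2 * N ^ 2) * ((v i ⬝ᵥ β0) ^ 2 / lam i) := by field_simp
  · have hS := sum_range_one_sub_pow_sub_pow_add_le (hγlam i).le (hγ1 i) N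
    calc _ ≤ 1 / (γ * N ^ 2) * (γ * lam i * N ^ 2 * (v i ⬝ᵥ β0) ^ 2) := by gcongr
      _ = lam i * (v i ⬝ᵥ β0) ^ 2 := by field_simp

/-- with `H = Σ_i λ_i v_i v_iᵀ` (orthonormal eigenvectors, positive
eigenvalues sorted decreasingly), `γλ_1 ≤ 1`, `ω_i = v_iᵀ β_0` and
`k* = max{k : λ_k ≥ 1/(γN)}`,
`(1/(γN²)) Σ_{k=0}^{N-1} ⟨(I-γH)^k - (I-γH)^{N+k}, β_0 β_0ᵀ⟩
  ≤ (1/(γ²N²)) Σ_{i ≤ k*} ω_i²/λ_i + Σ_{i > k*} λ_i ω_i²`. -/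
theorem bias_bound_effective_dim {d : ℕ} (H : Matrix (Fin d) (Fin d) ℝ) (γ : ℝ) (N : ℕ)
    (kstar : ℕ) (v : Fin d → Fin d → ℝ) (lam : Fin d → ℝ) (β0 : Fin d → ℝ)
    (hH : H = ∑ i, lam i • Matrix.vecMulVec (v i) (v i))
    (horth : ∀ i j, v i ⬝ᵥ v j = if i = j then (1 : ℝ) else 0)
    (hpos : ∀ i, 0 < lam i)
    (hsort : ∀ i j : Fin d, i ≤ j → lam j ≤ lam i)
    (hγ : 0 < γ) (hγ1 : ∀ i, γ * lam i ≤ 1) (hN : 0 < N)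
    (hk : ∀ i : Fin d, 1 / (γ * (N : ℝ)) ≤ lam i ↔ (i : ℕ) < kstar) :
    (1 / (γ * (N : ℝ) ^ 2)) * ∑ k ∈ Finset.range N,
        Matrix.trace ((((1 - γ • H) ^ k - (1 - γ • H) ^ (N + k)))ᵀ
          * Matrix.vecMulVec β0 β0)
      ≤ (1 / (γ ^ 2 * (N : ℝ) ^ 2))
          * ∑ i ∈ Finset.univ.filter (fun i : Fin d => (i : ℕ) < kstar),
              (v i ⬝ᵥ β0) ^ 2 / lam i
        + ∑ i ∈ Finset.univ.filter (fun i : Fin d => kstar ≤ (i : ℕ)),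
            lam i * (v i ⬝ᵥ β0) ^ 2 :=
  bias_bound_effective_dim_general H γ N kstar v lam β0 hH horth hpos hγ hγ1 hN
end
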